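/- arXiv:2205.11027 — 3 statements merged into one kernel-verified Lean document; each statement's English description precedes it below -/
import Mathlib

section
/- Let E be a real normed vector space and H a real inner product space, Φ : E → H a map satisfying the Hölder-type smoothness property ‖Φ(x) − Φ(y)‖ ≤ √(min(‖x‖, ‖y‖) · ‖x − y‖) + 2‖x − y‖ for all x, y, let β ∈ H with ‖β‖ ≤ C₁, and define Q(x) = ⟨Φ(x), β⟩. Let D be a finite nonempty subset of E and B a constant with ‖x_i − x_j‖ ≤ B for all x_i, x_j ∈ D. Let x_in lie in the convex hull of D, let p ∈ D be a point achieving the minimal distance d = min_{x_i ∈ D} ‖x_in − x_i‖ from x_in to D. Then |Q(x_in) − Q(p)| ≤ C₁ (√(min(‖x_in‖, ‖p‖)) · √d + 2d) ≤ C₁ (√(min(‖x_in‖, ‖p‖)) · √B + 2B). -/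
open scoped InnerProductSpace

/-- Value difference bound of a linear-in-features (deep Q) function at interpolated
data: if `x_in` lies in the convex hull of the dataset `D`, whose pairwise distances
are bounded by `B`, and `p` is a nearest point of `D` to `x_in`, then the value
difference is bounded via the distance `d = ‖x_in - p‖`, and further via `B`. -/
theorem value_difference_interpolated
    {E H : Type*} [NormedAddCommGroup E] [NormedSpace ℝ E]
    [NormedAddCommGroup H] [InnerProductSpace ℝ H]
    (Φ : E → H)
    (hΦ : ∀ x y : E,
      ‖Φ x - Φ y‖ ≤ Real.sqrt (min ‖x‖ ‖y‖ * ‖x - y‖) + 2 * ‖x - y‖)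
    (β : H) (C₁ : ℝ) (hβ : ‖β‖ ≤ C₁)
    (Q : E → ℝ) (hQ : ∀ x, Q x = ⟪Φ x, β⟫_ℝ)
    (D : Set E) (hDfin : D.Finite) (hDne : D.Nonempty)
    (B : ℝ) (hB : ∀ xi ∈ D, ∀ xj ∈ D, ‖xi - xj‖ ≤ B)
    (xin : E) (hxin : xin ∈ convexHull ℝ D)
    (p : E) (hp : p ∈ D) (hpmin : ∀ q ∈ D, ‖xin - p‖ ≤ ‖xin - q‖) :
    |Q xin - Q p| ≤
        C₁ * (Real.sqrt (min ‖xin‖ ‖p‖) * Real.sqrt ‖xin - p‖ + 2 * ‖xin - p‖) ∧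
      C₁ * (Real.sqrt (min ‖xin‖ ‖p‖) * Real.sqrt ‖xin - p‖ + 2 * ‖xin - p‖) ≤
        C₁ * (Real.sqrt (min ‖xin‖ ‖p‖) * Real.sqrt B + 2 * B) := by
  have hC₁ : 0 ≤ C₁ := le_trans (norm_nonneg β) hβ
  have hmin : (0:ℝ) ≤ min ‖xin‖ ‖p‖ := le_min (norm_nonneg _) (norm_nonneg _)
  have hdB : ‖xin - p‖ ≤ B := by
    have hconv : convexHull ℝ D ⊆ {y : E | ‖y - p‖ ≤ B} := by
      apply convexHull_min
      · intro q hq; exact hB q hq p hp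
      · intro a ha b hb s t hs ht hst
        simp only [Set.mem_setOf_eq] at *
        have : s • a + t • b - p = s • (a - p) + t • (b - p) := by
          have hpd : p = s • p + t • p := by rw [← add_smul, hst, one_smul]
          nth_rewrite 1 [hpd]
          rw [smul_sub, smul_sub]; abel
        rw [this]
        calc ‖s • (a - p) + t • (b - p)‖ ≤ s * ‖a - p‖ + t * ‖b - p‖ := by
              refine (norm_add_le _ _).trans ?_
              rw [norm_smul, norm_smul, Real.norm_of_nonneg hs, Real.norm_of_nonneg ht]
          _ ≤ s * B + t * B := by
              gcongr
          _ = B := by rw [← add_mul, hst, one_mul]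
    exact hconv hxin
  constructor
  · rw [hQ, hQ, ← inner_sub_left]
    calc |⟪Φ xin - Φ p, β⟫_ℝ| ≤ ‖Φ xin - Φ p‖ * ‖β‖ := abs_real_inner_le_norm _ _
      _ ≤ (Real.sqrt (min ‖xin‖ ‖p‖ * ‖xin - p‖) + 2 * ‖xin - p‖) * C₁ :=
          mul_le_mul (hΦ xin p) hβ (norm_nonneg _) (by positivity)
      _ = C₁ * (Real.sqrt (min ‖xin‖ ‖p‖) * Real.sqrt ‖xin - p‖ + 2 * ‖xin - p‖) := by
          rw [Real.sqrt_mul hmin]; ring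
  · gcongr <;>
      first
        | exact hdB
        | exact Real.sqrt_nonneg _
        | exact Real.sqrt_le_sqrt hdB
end

section
/- Let H be a real Hilbert space, let f₁, …, f_n : H → ℝ be differentiable functions with gradients ∇fᵢ, let y ∈ ℝⁿ, and let θ : ℝ → H be a differentiable curve satisfying the gradient-flow equation θ'(t) = −Σⱼ (fⱼ(θ(t)) − yⱼ) ∇fⱼ(θ(t)) for all t. Define uᵢ(t) = fᵢ(θ(t)) and H_{ij}(t) = ⟨∇fᵢ(θ(t)), ∇fⱼ(θ(t))⟩. Then each uᵢ is differentiable and uᵢ'(t) = −Σⱼ H_{ij}(t)(uⱼ(t) − yⱼ) for all t; that is, the output vector u(t) evolves as du/dt = −H(t)(u(t) − Y). -/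
open scoped InnerProductSpace

theorem HasGradientAt.comp_hasDerivAt {𝕜 F : Type*} [RCLike 𝕜] [NormedAddCommGroup F]
    [InnerProductSpace 𝕜 F] [CompleteSpace F] {f : F → 𝕜} {g v : F} {γ : 𝕜 → F} {t : 𝕜}
    (hf : HasGradientAt f g (γ t)) (hγ : HasDerivAt γ v t) :
    HasDerivAt (fun s => f (γ s)) ⟪g, v⟫_𝕜 t := by
  have h := hf.hasFDerivAt.comp_hasDerivAt t hγ
  rw [InnerProductSpace.toDual_apply_apply] at h
  exact h

/-- Training dynamics of network outputs under gradient flow of the squared loss: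
if `θ'(t) = −Σⱼ (fⱼ(θ(t)) − yⱼ) ∇fⱼ(θ(t))`, then the outputs `uᵢ(t) = fᵢ(θ(t))`
satisfy `uᵢ'(t) = −Σⱼ H_{ij}(t)(uⱼ(t) − yⱼ)` with `H_{ij}(t) = ⟪∇fᵢ, ∇fⱼ⟫`. -/
theorem output_dynamics_gradient_flow
    {H : Type*} [NormedAddCommGroup H] [InnerProductSpace ℝ H] [CompleteSpace H]
    {n : ℕ} (f : Fin n → H → ℝ) (grad : Fin n → H → H)
    (hgrad : ∀ i θ, HasGradientAt (f i) (grad i θ) θ)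
    (y : Fin n → ℝ) (θ : ℝ → H)
    (hθ : ∀ t, HasDerivAt θ (-(∑ j, (f j (θ t) - y j) • grad j (θ t))) t) :
    ∀ i t, HasDerivAt (fun s => f i (θ s))
      (-(∑ j, ⟪grad i (θ t), grad j (θ t)⟫_ℝ * (f j (θ t) - y j))) t := by
  intro i t
  refine ((hgrad i (θ t)).comp_hasDerivAt (hθ t)).congr_deriv ?_
  simp only [inner_neg_right, inner_sum, real_inner_smul_right, mul_comm]
end

section
/- Let E be a real normed vector space with its Borel σ-algebra, let κ be a Markov kernel from E to E, let γ ∈ [0, 1), let x_o ∈ E, and let C₁, C₂, R_max ≥ 0. Let Q : E → ℝ be a measurable function satisfying |Q(x) − Q(y)| ≤ C₁ (C₂ √‖x − y‖ + 2‖x − y‖) for all x, y ∈ E, integrable with respect to κ(x) for every x, and let r : E → ℝ satisfy |r(x)| ≤ R_max for all x. Write d₁(x) = ‖x − x_o‖ and d₂(x') = ‖x' − x_o‖, and assume x' ↦ C₂√(d₂(x')) + 2 d₂(x') is integrable with respect to κ(x). Then for every x ∈ E, |Q(x) − r(x) − γ ∫ Q(x') dκ(x)(x')| ≤ (1 − γ)|Q(x_o)|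 + R_max + C₁ (C₂ √(d₁(x)) + 2 d₁(x)) + (2 − γ) C₁ ∫ (C₂ √(d₂(x')) + 2 d₂(x')) dκ(x)(x'). -/
open MeasureTheory ProbabilityTheory

/-!
Add and subtract `Q x_o`: the residual splits into `Q x - Q x_o`, `(1 - γ) Q x_o`, the reward and
`γ (Q x_o - ∫ Q dκ(x))`. The smoothness modulus bounds the first term directly and, averaged over
`κ(x)`, the last one; its factor `γ` is then relaxed to the larger `2 - γ`.
-/

theorem abs_sub_integral_le_integral_of_abs_sub_le {α : Type*} [MeasurableSpace α]
    {μ : Measure α} [IsProbabilityMeasure μ] {f g : α → ℝ} {a : α}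
    (hf : Integrable f μ) (hg : Integrable g μ) (hfg : ∀ y, |f a - f y| ≤ g y) :
    |f a - ∫ y, f y ∂μ| ≤ ∫ y, g y ∂μ := by
  have hmean : f a - ∫ y, f y ∂μ = ∫ y, (f a - f y) ∂μ := by
    rw [integral_sub (integrable_const _) hf, integral_const, probReal_univ, one_smul]
  calc |f a - ∫ y, f y ∂μ| = ‖∫ y, (f a - f y) ∂μ‖ := by rw [hmean, Real.norm_eq_abs]
    _ ≤ ∫ y, |f a - f y| ∂μ := norm_integral_le_integral_norm _
    _ ≤ ∫ y, g y ∂μ :=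
      integral_mono_of_nonneg (.of_forall fun _ => abs_nonneg _) hg (.of_forall hfg)

theorem abs_sub_sub_mul_le {q q₀ r γ I : ℝ} (hγ0 : 0 ≤ γ) (hγ1 : γ ≤ 1) :
    |q - r - γ * I| ≤ |q - q₀| + (1 - γ) * |q₀| + |r| + γ * |q₀ - I| := by
  have hsplit : q - r - γ * I = (q - q₀) + (1 - γ) * q₀ - r + γ * (q₀ - I) := by ring
  calc |q - r - γ * I| ≤ |q - q₀| + |(1 - γ) * q₀| + |r| + |γ * (q₀ - I)| := by
        rw [hsplit]
        linarith [abs_add_le (q - q₀ + (1 - γ) * q₀ - r) (γ * (q₀ - I)),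
          abs_sub (q - q₀ + (1 - γ) * q₀) r, abs_add_le (q - q₀) ((1 - γ) * q₀)]
    _ = |q - q₀| + (1 - γ) * |q₀| + |r| + γ * |q₀ - I| := by
        rw [abs_mul, abs_mul, abs_of_nonneg (sub_nonneg.2 hγ1), abs_of_nonneg hγ0]

theorem bellman_residual_pointwise_bound_general
    {E : Type*} [NormedAddCommGroup E]
    [MeasurableSpace E]
    (κ : Kernel E E) [IsMarkovKernel κ]
    (γ : ℝ) (hγ0 : 0 ≤ γ) (hγ1 : γ < 1)
    (xo : E) (C₁ C₂ Rmax : ℝ) (hC₁ : 0 ≤ C₁) (hC₂ : 0 ≤ C₂)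
    (Q : E → ℝ)
    (hQsmooth : ∀ x y : E,
      |Q x - Q y| ≤ C₁ * (C₂ * Real.sqrt ‖x - y‖ + 2 * ‖x - y‖))
    (hQint : ∀ x, Integrable Q (κ x))
    (r : E → ℝ) (hr : ∀ x, |r x| ≤ Rmax)
    (hint : ∀ x, Integrable
      (fun x' => C₂ * Real.sqrt ‖x' - xo‖ + 2 * ‖x' - xo‖) (κ x)) :
    ∀ x : E,
      |Q x - r x - γ * ∫ x', Q x' ∂(κ x)| ≤
        (1 - γ) * |Q xo| + Rmax +
          C₁ * (C₂ * Real.sqrt ‖x - xo‖ + 2 * ‖x - xo‖) +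
          (2 - γ) * C₁ *
            ∫ x', (C₂ * Real.sqrt ‖x' - xo‖ + 2 * ‖x' - xo‖) ∂(κ x) := by
  intro x
  set J := ∫ x', (C₂ * Real.sqrt ‖x' - xo‖ + 2 * ‖x' - xo‖) ∂(κ x)
  have hJ0 : 0 ≤ J := integral_nonneg fun _ => by positivity
  have hmean : |Q xo - ∫ x', Q x' ∂(κ x)| ≤ C₁ * J := by
    rw [← integral_const_mul]
    refine abs_sub_integral_le_integral_of_abs_sub_le (hQint x) ((hint x).const_mul C₁)
      fun x' => ?_
    simpa only [abs_sub_comm, norm_sub_rev] using hQsmooth x' xo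
  have hγJ : γ * (C₁ * J) ≤ (2 - γ) * C₁ * J := by nlinarith [mul_nonneg hC₁ hJ0]
  calc |Q x - r x - γ * ∫ x', Q x' ∂(κ x)|
      ≤ |Q x - Q xo| + (1 - γ) * |Q xo| + |r x| + γ * |Q xo - ∫ x', Q x' ∂(κ x)| :=
        abs_sub_sub_mul_le hγ0 hγ1.le
    _ ≤ C₁ * (C₂ * Real.sqrt ‖x - xo‖ + 2 * ‖x - xo‖) + (1 - γ) * |Q xo| + Rmax
        + (2 - γ) * C₁ * J := by
        gcongr ?_ + _ + ?_ + ?_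
        · exact hQsmooth x xo
        · exact hr x
        · exact (mul_le_mul_of_nonneg_left hmean hγ0).trans hγJ
    _ = _ := by ring

/-- Pointwise bound on the Bellman residual of a smooth Q-function in terms of the
value at the dataset centroid, the reward bound, and the sample-to-centroid
distances (core inequality of the paper's Theorem 2). -/
theorem bellman_residual_pointwise_bound
    {E : Type*} [NormedAddCommGroup E] [NormedSpace ℝ E]
    [MeasurableSpace E] [BorelSpace E]
    (κ : Kernel E E) [IsMarkovKernel κ]
    (γ : ℝ) (hγ0 : 0 ≤ γ) (hγ1 : γ < 1)
    (xo : E) (C₁ C₂ Rmax : ℝ) (hC₁ : 0 ≤ C₁) (hC₂ : 0 ≤ C₂) (hRmax : 0 ≤ Rmax)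
    (Q : E → ℝ) (hQmeas : Measurable Q)
    (hQsmooth : ∀ x y : E,
      |Q x - Q y| ≤ C₁ * (C₂ * Real.sqrt ‖x - y‖ + 2 * ‖x - y‖))
    (hQint : ∀ x, Integrable Q (κ x))
    (r : E → ℝ) (hr : ∀ x, |r x| ≤ Rmax)
    (hint : ∀ x, Integrable
      (fun x' => C₂ * Real.sqrt ‖x' - xo‖ + 2 * ‖x' - xo‖) (κ x)) :
    ∀ x : E,
      |Q x - r x - γ * ∫ x', Q x' ∂(κ x)| ≤
        (1 - γ) * |Q xo| + Rmax +
          C₁ * (C₂ * Real.sqrt ‖x - xo‖ + 2 * ‖x - xo‖) +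
          (2 - γ) * C₁ *
            ∫ x', (C₂ * Real.sqrt ‖x' - xo‖ + 2 * ‖x' - xo‖) ∂(κ x) :=
  bellman_residual_pointwise_bound_general κ γ hγ0 hγ1 xo C₁ C₂ Rmax hC₁ hC₂ Q hQsmooth hQint r hr
    hint
end
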